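/- Let S be an inverse semigroupoid, X a set, {X_s} a family of subsets of X and θ_s : X_{s*} → X_s a family of maps. The pair ({X_s},{θ_s}) is a partial action (satisfying axioms P1–P3) if and only if: (E1) each θ_s is a bijection with θ_s⁻¹ = θ_{s*}, and X = ∪_s X_s; (E2) for every composable pair (s,t), θ_{st} extends θ_s ∘ θ_t (where θ_s ∘ θ_t is defined on θ_t⁻¹(X_t ∩ X_{s*})); (E3) X_s ⊆ X_t whenever s ≤ t. -/

import Mathlib

structure InvSgpd (S : Type*) (O : Type*) where
  d : S → O
  c : S → O
  mul : S → S → S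
  d_mul : ∀ s t, d s = c t → d (mul s t) = d t
  c_mul : ∀ s t, d s = c t → c (mul s t) = c s
  assoc : ∀ p s t, d p = c s → d s = c t → mul (mul p s) t = mul p (mul s t)
  inv : S → S
  comp_inv : ∀ s, d s = c (inv s)
  inv_comp : ∀ s, d (inv s) = c s
  mul_inv_mul : ∀ s, mul (mul s (inv s)) s = s
  inv_mul_inv : ∀ s, mul (mul (inv s) s) (inv s) = inv s
  inv_unique : ∀ s t, d s = c t → d t = c s →
    mul (mul s t) s = s → mul (mul t s) t = t → t = inv s

namespace InvSgpd
variable {S O : Type*} (G : InvSgpd S O)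
def Composable (s t : S) : Prop := G.d s = G.c t
def Idem (e : S) : Prop := G.Composable e e ∧ G.mul e e = e
def le (s t : S) : Prop :=
  G.d s = G.d t ∧ G.c s = G.c t ∧ s = G.mul t (G.mul (G.inv s) s)
end InvSgpd

/-- A partial action of an inverse semigroupoid `G` on a set (type) `X`:
`dom s` plays the role of `X_s` and `act s` the role of `θ_s : X_{s*} → X_s`
(as a total map whose values are only relevant on `dom (G.inv s)`). -/
structure PAction {S O : Type*} (G : InvSgpd S O) (X : Type*) where
  dom : S → Set X
  act : S → X → X
  maps : ∀ s, ∀ x ∈ dom (G.inv s), act s x ∈ dom s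
  /-- (P1) `θ_e = id_{X_e}` for idempotents. -/
  idem_id : ∀ e, G.Idem e → ∀ x ∈ dom e, act e x = x
  /-- (P1) every point lies in some `X_e` with `e` idempotent. -/
  cover : ∀ x : X, ∃ e, G.Idem e ∧ x ∈ dom e
  /-- (P2) `X_s ⊆ X_{ss*}`. -/
  dom_mono : ∀ s, dom s ⊆ dom (G.mul s (G.inv s))
  /-- (P3) `θ_t⁻¹(X_t ∩ X_{s*}) = X_{(st)*} ∩ X_{t*}` for composable `(s,t)`. -/
  preimage_eq : ∀ s t, G.Composable s t →
    {x | x ∈ dom (G.inv t) ∧ act t x ∈ dom t ∩ dom (G.inv s)}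
      = dom (G.inv (G.mul s t)) ∩ dom (G.inv t)
  /-- (P3) `θ_s (θ_t x) = θ_{st} x` on `X_{(st)*} ∩ X_{t*}`. -/
  mul_act : ∀ s t, G.Composable s t →
    ∀ x ∈ dom (G.inv (G.mul s t)) ∩ dom (G.inv t),
      act s (act t x) = act (G.mul s t) x

namespace PAction
variable {S O X : Type*} {G : InvSgpd S O}

/-- A partial action is global when `X_s = X_{ss*}` for every `s`. -/
def IsGlobal (θ : PAction G X) : Prop := ∀ s, θ.dom s = θ.dom (G.mul s (G.inv s))

end PAction

/-!
Adjoining a zero to `S` (non-composable products become `0`) gives an inverse semigroup, in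
which idempotents commute and `(st)* = t* s*`; this supplies the algebra of `S`.

(P) ⇒ (E): `θ_{s*} ∘ θ_s = θ_{s*s}` is the identity on `X_{s*} ⊆ X_{s*s}`, and for `a ≤ b`
the map `θ_b` extends `θ_a = θ_{b a* a}`, so the image `X_a` of `θ_a` lies in `X_b`.

(E) ⇒ (P): the only nontrivial point is `θ_t(X_{(st)*} ∩ X_{t*}) ⊆ X_{s*}`. By (E2) for the
pair `(st, t*)` the point `θ_t x` lies in `X_{(s t t*)*}`, and `(s t t*)* = t t* s* ≤ s*`.
-/

structure IsInverseSemigroup {M : Type*} [Semigroup M] (inv : M → M) : Prop where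
  mul_inv_mul : ∀ a, a * inv a * a = a
  inv_mul_inv : ∀ a, inv a * a * inv a = inv a
  eq_inv : ∀ a b, a * b * a = a → b * a * b = b → b = inv a

namespace IsInverseSemigroup
variable {M : Type*} [Semigroup M] {inv : M → M}

theorem inv_inv (h : IsInverseSemigroup inv) (a : M) : inv (inv a) = a :=
  (h.eq_inv _ _ (h.inv_mul_inv a) (h.mul_inv_mul a)).symm

theorem inv_eq_self (h : IsInverseSemigroup inv) {e : M} (he : IsIdempotentElem e) : inv e = e :=
  (h.eq_inv e e (by rw [he.eq, he.eq]) (by rw [he.eq, he.eq])).symm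

theorem isIdempotentElem_inv_mul (h : IsInverseSemigroup inv) (a : M) :
    IsIdempotentElem (inv a * a) := by
  rw [IsIdempotentElem, ← mul_assoc, h.inv_mul_inv]

theorem isIdempotentElem_mul_inv (h : IsInverseSemigroup inv) (a : M) :
    IsIdempotentElem (a * inv a) := by
  simpa only [h.inv_inv] using h.isIdempotentElem_inv_mul (inv a)

theorem isIdempotentElem_mul (h : IsInverseSemigroup inv) {e f : M} (he : IsIdempotentElem e)
    (hf : IsIdempotentElem f) : IsIdempotentElem (e * f) := by
  set x := inv (e * f)
  have hx : e * f * x * (e * f) = e * f := h.mul_inv_mul _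
  have hx' : x * (e * f) * x = x := h.inv_mul_inv _
  have hfxe : f * x * e = x := by
    refine h.eq_inv _ _ ?_ ?_
    · calc e * f * (f * x * e) * (e * f) = e * (f * f) * x * (e * e) * f := by
            simp only [mul_assoc]
        _ = e * f * x * (e * f) := by rw [hf.eq, he.eq]; simp only [mul_assoc]
        _ = e * f := hx
    · calc f * x * e * (e * f) * (f * x * e) = f * (x * (e * e) * (f * f) * x) * e := by
            simp only [mul_assoc]
        _ = f * (x * (e * f) * x) * e := by rw [he.eq, hf.eq]; simp only [mul_assoc]
        _ = f * x * e := by rw [hx']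
  have hxx : IsIdempotentElem x :=
    calc x * x = f * x * e * (f * x * e) := by rw [hfxe]
      _ = f * (x * (e * f) * x) * e := by simp only [mul_assoc]
      _ = f * x * e := by rw [hx']
      _ = x := hfxe
  have hefx : e * f = x := by rw [← h.inv_eq_self hxx, h.inv_inv]
  rwa [hefx]

theorem mul_comm_of_isIdempotentElem (h : IsInverseSemigroup inv) {e f : M}
    (he : IsIdempotentElem e) (hf : IsIdempotentElem f) : e * f = f * e := by
  have hef := h.isIdempotentElem_mul he hf
  have hfe := h.isIdempotentElem_mul hf he
  have hinv : f * e = inv (e * f) := by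
    refine h.eq_inv _ _ ?_ ?_
    · calc e * f * (f * e) * (e * f) = e * (f * f) * (e * e) * f := by simp only [mul_assoc]
        _ = e * f * (e * f) := by rw [hf.eq, he.eq]; simp only [mul_assoc]
        _ = e * f := hef.eq
    · calc f * e * (e * f) * (f * e) = f * (e * e) * (f * f) * e := by simp only [mul_assoc]
        _ = f * e * (f * e) := by rw [hf.eq, he.eq]; simp only [mul_assoc]
        _ = f * e := hfe.eq
  rw [hinv, h.inv_eq_self hef]

theorem inv_mul (h : IsInverseSemigroup inv) (a b : M) : inv (a * b) = inv b * inv a := by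
  have hcomm := h.mul_comm_of_isIdempotentElem (h.isIdempotentElem_mul_inv b)
    (h.isIdempotentElem_inv_mul a)
  refine (h.eq_inv _ _ ?_ ?_).symm
  · calc a * b * (inv b * inv a) * (a * b) = a * (b * inv b * (inv a * a)) * b := by
          simp only [mul_assoc]
      _ = a * inv a * a * (b * inv b * b) := by rw [hcomm]; simp only [mul_assoc]
      _ = a * b := by rw [h.mul_inv_mul, h.mul_inv_mul]
  · calc inv b * inv a * (a * b) * (inv b * inv a)
          = inv b * (inv a * a * (b * inv b)) * inv a := by simp only [mul_assoc]
      _ = inv b * b * inv b * (inv a * a * inv a) := by rw [← hcomm]; simp only [mul_assoc]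
      _ = inv b * inv a := by rw [h.inv_mul_inv, h.inv_mul_inv]

theorem mul_eq_mul_inv_mul (h : IsInverseSemigroup inv) {e : M} (he : IsIdempotentElem e)
    (a : M) :
    e * a = a * (inv (e * a) * (e * a)) := by
  have hcomm := h.mul_comm_of_isIdempotentElem he (h.isIdempotentElem_mul_inv a)
  calc e * a = e * (a * inv a) * a := by rw [mul_assoc, h.mul_inv_mul]
    _ = a * inv a * e * a := by rw [hcomm]
    _ = a * (inv a * e) * (e * a) := by
      simp only [mul_assoc]; rw [← mul_assoc e e a, he.eq]
    _ = a * (inv (e * a) * (e * a)) := by rw [h.inv_mul, h.inv_eq_self he, mul_assoc]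

end IsInverseSemigroup

namespace InvSgpd
variable {S O : Type*}

inductive AdjZero (_ : InvSgpd S O) : Type _
  | zero
  | of (s : S)

variable {G : InvSgpd S O}

open Classical in
noncomputable instance : Mul G.AdjZero where
  mul
    | .of s, .of t => if G.Composable s t then .of (G.mul s t) else .zero
    | _, _ => .zero

instance : Inv G.AdjZero where
  inv
    | .of s => .of (G.inv s)
    | .zero => .zero

namespace AdjZero

theorem of_mul_of {s t : S} (h : G.Composable s t) :
    (of s : G.AdjZero) * of t = of (G.mul s t) :=
  if_pos h

theorem of_mul_of_of_not {s t : S} (h : ¬G.Composable s t) :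
    (of s : G.AdjZero) * of t = zero :=
  if_neg h

theorem of_mul_of_eq_of {s t u : S} :
    (of s : G.AdjZero) * of t = of u ↔ G.Composable s t ∧ G.mul s t = u := by
  by_cases h : G.Composable s t
  · simp [of_mul_of h, h]
  · simp [of_mul_of_of_not h, h]

theorem inv_of (s : S) : (of s : G.AdjZero)⁻¹ = of (G.inv s) := rfl

theorem zero_mul (a : G.AdjZero) : zero * a = zero := rfl

theorem mul_zero (a : G.AdjZero) : a * zero = zero := by cases a <;> rfl

theorem of_mul_of_mul_of (p s t : S) :
    (of p : G.AdjZero) * of s * of t = of p * (of s * of t) := by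
  by_cases hps : G.Composable p s <;> by_cases hst : G.Composable s t
  · have hps_t : G.Composable (G.mul p s) t := (G.d_mul p s hps).trans hst
    have hp_st : G.Composable p (G.mul s t) := hps.trans (G.c_mul s t hst).symm
    rw [of_mul_of hps, of_mul_of hst, of_mul_of hps_t, of_mul_of hp_st, G.assoc p s t hps hst]
  · have hps_t : ¬G.Composable (G.mul p s) t := by
      rwa [Composable, G.d_mul p s hps]
    rw [of_mul_of hps, of_mul_of_of_not hst, of_mul_of_of_not hps_t, mul_zero]
  · have hp_st : ¬G.Composable p (G.mul s t) := by
      rwa [Composable, G.c_mul s t hst]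
    rw [of_mul_of_of_not hps, of_mul_of hst, of_mul_of_of_not hp_st, zero_mul]
  · rw [of_mul_of_of_not hps, of_mul_of_of_not hst, zero_mul, mul_zero]

noncomputable instance : Semigroup G.AdjZero where
  mul_assoc
    | of p, of s, of t => of_mul_of_mul_of p s t
    | zero, _, _ => rfl
    | of _, zero, _ => by rw [zero_mul, mul_zero, zero_mul]
    | of _, of _, zero => by rw [mul_zero, mul_zero, mul_zero]

end AdjZero

open AdjZero

variable (G) in
theorem isInverseSemigroup_adjZero : IsInverseSemigroup (fun a : G.AdjZero => a⁻¹) where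
  mul_inv_mul
    | of s => by
      rw [inv_of, of_mul_of (G.comp_inv s), of_mul_of, G.mul_inv_mul]
      exact (G.d_mul _ _ (G.comp_inv s)).trans (G.inv_comp s)
    | zero => rfl
  inv_mul_inv
    | of s => by
      rw [inv_of, of_mul_of (G.inv_comp s), of_mul_of, G.inv_mul_inv]
      exact (G.d_mul _ _ (G.inv_comp s)).trans (G.comp_inv s)
    | zero => rfl
  eq_inv
    | zero, _, _, h => by rwa [mul_zero, zero_mul, eq_comm] at h
    | of s, zero, h, _ => by rw [mul_zero, zero_mul] at h; cases h
    | of s, of t, h₁, h₂ => by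
      by_cases hst : G.Composable s t
      · rw [of_mul_of hst, of_mul_of_eq_of] at h₁
        have hts : G.Composable t s := (G.d_mul s t hst).symm.trans h₁.1
        rw [of_mul_of hts, of_mul_of_eq_of] at h₂
        rw [inv_of, G.inv_unique s t hst hts h₁.2 h₂.2]
      · rw [of_mul_of_of_not hst, zero_mul] at h₁
        cases h₁

theorem inv_inv (s : S) : G.inv (G.inv s) = s :=
  of.inj ((isInverseSemigroup_adjZero G).inv_inv (of s))

theorem idem_iff_isIdempotentElem {e : S} :
    G.Idem e ↔ IsIdempotentElem (of e : G.AdjZero) :=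
  of_mul_of_eq_of.symm

theorem Idem.inv_eq {e : S} (he : G.Idem e) : G.inv e = e :=
  of.inj ((isInverseSemigroup_adjZero G).inv_eq_self (idem_iff_isIdempotentElem.mp he))

theorem idem_inv_mul (s : S) : G.Idem (G.mul (G.inv s) s) := by
  rw [idem_iff_isIdempotentElem, ← of_mul_of (G.inv_comp s)]
  exact (isInverseSemigroup_adjZero G).isIdempotentElem_inv_mul (of s)

theorem idem_mul_inv (s : S) : G.Idem (G.mul s (G.inv s)) := by
  simpa only [inv_inv] using idem_inv_mul (G := G) (G.inv s)

theorem le_iff {s t : S} : G.le s t ↔ (of s : G.AdjZero) = of t * ((of s)⁻¹ * of s) := by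
  have hc : G.c (G.mul (G.inv s) s) = G.d s :=
    (G.c_mul _ _ (G.inv_comp s)).trans (G.comp_inv s).symm
  rw [inv_of, of_mul_of (G.inv_comp s), eq_comm, of_mul_of_eq_of, Composable, hc]
  constructor
  · rintro ⟨hd, -, heq⟩
    exact ⟨hd.symm, heq.symm⟩
  · rintro ⟨hd, heq⟩
    refine ⟨hd.symm, ?_, heq.symm⟩
    rw [← heq, G.c_mul _ _ (hd.trans hc.symm)]

theorem inv_mul_mul_inv_le {s t : S} (h : G.Composable s t) :
    G.le (G.inv (G.mul (G.mul s t) (G.inv t))) (G.inv s) := by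
  have hG := isInverseSemigroup_adjZero G
  have hst_t : G.Composable (G.mul s t) (G.inv t) := (G.d_mul s t h).trans (G.comp_inv t)
  have hof : (of (G.inv (G.mul (G.mul s t) (G.inv t))) : G.AdjZero)
      = of t * (of t)⁻¹ * (of s)⁻¹ := by
    rw [← inv_of, ← of_mul_of hst_t, ← of_mul_of h, ← inv_of, hG.inv_mul, hG.inv_mul,
      hG.inv_inv, mul_assoc]
  rw [le_iff, hof]
  exact hG.mul_eq_mul_inv_mul (hG.isIdempotentElem_mul_inv (of t)) (of s)⁻¹

end InvSgpd

namespace PAction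
variable {S O X : Type*} {G : InvSgpd S O} (θ : PAction G X)

theorem dom_inv_subset (s : S) : θ.dom (G.inv s) ⊆ θ.dom (G.mul (G.inv s) s) := by
  simpa only [G.inv_inv] using θ.dom_mono (G.inv s)

theorem act_inv_act {s : S} {x : X} (hx : x ∈ θ.dom (G.inv s)) :
    θ.act (G.inv s) (θ.act s x) = x := by
  have hf := G.idem_inv_mul s
  have hxf := θ.dom_inv_subset s hx
  rw [θ.mul_act _ _ (G.inv_comp s) x ⟨by rwa [hf.inv_eq], hx⟩, θ.idem_id _ hf x hxf]

theorem act_act_inv {s : S} {y : X} (hy : y ∈ θ.dom s) : θ.act s (θ.act (G.inv s) y) = y := by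
  simpa only [G.inv_inv] using θ.act_inv_act (s := G.inv s) (by rwa [G.inv_inv])

theorem invOn (s : S) : Set.InvOn (θ.act (G.inv s)) (θ.act s) (θ.dom (G.inv s)) (θ.dom s) :=
  ⟨fun _ => θ.act_inv_act, fun _ => θ.act_act_inv⟩

theorem mapsTo (s : S) : Set.MapsTo (θ.act s) (θ.dom (G.inv s)) (θ.dom s) :=
  fun x => θ.maps s x

theorem bijOn (s : S) : Set.BijOn (θ.act s) (θ.dom (G.inv s)) (θ.dom s) :=
  (θ.invOn s).bijOn (θ.mapsTo s) (by simpa only [G.inv_inv] using θ.mapsTo (G.inv s))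

theorem act_mul_of_mem {s t : S} (h : G.Composable s t) {x : X} (hx : x ∈ θ.dom (G.inv t))
    (htx : θ.act t x ∈ θ.dom t ∩ θ.dom (G.inv s)) :
    x ∈ θ.dom (G.inv (G.mul s t)) ∧ θ.act (G.mul s t) x = θ.act s (θ.act t x) := by
  have hx' : x ∈ θ.dom (G.inv (G.mul s t)) ∩ θ.dom (G.inv t) :=
    θ.preimage_eq s t h ▸ ⟨hx, htx⟩
  exact ⟨hx'.1, (θ.mul_act s t h x hx').symm⟩

theorem dom_subset_of_le {a b : S} (hab : G.le a b) : θ.dom a ⊆ θ.dom b := by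
  obtain ⟨hd, -, hmul⟩ := hab
  set f := G.mul (G.inv a) a
  have hf : G.Idem f := G.idem_inv_mul a
  have hbf : G.Composable b f :=
    hd.symm.trans ((G.c_mul _ _ (G.inv_comp a)).trans (G.comp_inv a).symm).symm
  intro y hy
  set x := θ.act (G.inv a) y
  have hxa : x ∈ θ.dom (G.inv a) := θ.maps _ _ (by rwa [G.inv_inv])
  have hxf : x ∈ θ.dom (G.inv (G.mul b f)) ∩ θ.dom (G.inv f) := by
    rw [← hmul, hf.inv_eq]
    exact ⟨hxa, θ.dom_inv_subset a hxa⟩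
  have hfx : θ.act f x = x := θ.idem_id f hf x (θ.dom_inv_subset a hxa)
  have hxb : x ∈ θ.dom (G.inv b) := by
    rw [← θ.preimage_eq b f hbf] at hxf
    exact hfx ▸ hxf.2.2
  have hbx : θ.act b x = y := by
    rw [← hfx, θ.mul_act b f hbf x hxf, ← hmul, θ.act_act_inv hy]
  exact hbx ▸ θ.maps b x hxb

end PAction

section Extension
variable {S O X : Type*} {G : InvSgpd S O} {dom : S → Set X} {act : S → X → X}

variable (G dom act) in
def ExtendsActMul : Prop :=
  ∀ s t, G.Composable s t → ∀ x, x ∈ dom (G.inv t) → act t x ∈ dom t ∩ dom (G.inv s) →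
    x ∈ dom (G.inv (G.mul s t)) ∧ act (G.mul s t) x = act s (act t x)

theorem dom_subset_dom_mul_inv_of_extends
    (hmaps : ∀ s, ∀ x ∈ dom (G.inv s), act s x ∈ dom s)
    (hext : ExtendsActMul G dom act)
    (s : S) : dom s ⊆ dom (G.mul s (G.inv s)) := by
  intro x hx
  have hx' : x ∈ dom (G.inv (G.inv s)) := by rwa [G.inv_inv]
  have hsx := hmaps (G.inv s) x hx'
  have hx'' := (hext s (G.inv s) (G.comp_inv s) x hx' ⟨hsx, hsx⟩).1
  rwa [(G.idem_mul_inv s).inv_eq] at hx''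

theorem act_eq_self_of_idem (hinj : ∀ s, Set.InjOn (act s) (dom (G.inv s)))
    (hmaps : ∀ s, ∀ x ∈ dom (G.inv s), act s x ∈ dom s)
    (hext : ExtendsActMul G dom act)
    {e : S} (he : G.Idem e) {x : X} (hx : x ∈ dom e) : act e x = x := by
  have hx' : x ∈ dom (G.inv e) := by rwa [he.inv_eq]
  have hex : act e x ∈ dom (G.inv e) := by rw [he.inv_eq]; exact hmaps e x hx'
  have heex : act e (act e x) = act e x := by
    rw [← (hext e e he.1 x hx' ⟨hmaps e x hx', hex⟩).2, he.2]
  exact hinj e hex hx' heex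

theorem act_mem_dom_inv_of_extends
    (hleft : ∀ t, ∀ x ∈ dom (G.inv t), act (G.inv t) (act t x) = x)
    (hmaps : ∀ s, ∀ x ∈ dom (G.inv s), act s x ∈ dom s)
    (hext : ExtendsActMul G dom act)
    (hmono : ∀ s t, G.le s t → dom s ⊆ dom t)
    (s t : S) (h : G.Composable s t) {x : X}
    (hx : x ∈ dom (G.inv (G.mul s t)) ∩ dom (G.inv t)) :
    act t x ∈ dom (G.inv s) := by
  obtain ⟨hxst, hxt⟩ := hx
  have hy : act t x ∈ dom (G.inv (G.inv t)) := by rw [G.inv_inv]; exact hmaps t x hxt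
  have hcomp : G.Composable (G.mul s t) (G.inv t) := (G.d_mul s t h).trans (G.comp_inv t)
  refine hmono _ _ (G.inv_mul_mul_inv_le h) (hext _ _ hcomp _ hy ?_).1
  rw [hleft t x hxt]
  exact ⟨hxt, hxst⟩

end Extension

/-- Characterization of partial actions: given a family of subsets `dom s ⊆ X`
and maps `act s` carrying `dom (s*)` into `dom s`, the axioms (P1)–(P3) hold
if and only if (E1)–(E3) hold. -/
theorem paction_iff {S O X : Type*} (G : InvSgpd S O)
    (dom : S → Set X) (act : S → X → X)
    (hmaps : ∀ s, ∀ x ∈ dom (G.inv s), act s x ∈ dom s) :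
    -- (P1) ∧ (P2) ∧ (P3)
    (((∀ e, G.Idem e → ∀ x ∈ dom e, act e x = x) ∧
        (∀ x : X, ∃ e, G.Idem e ∧ x ∈ dom e)) ∧
      (∀ s, dom s ⊆ dom (G.mul s (G.inv s))) ∧
      (∀ s t, G.Composable s t →
        ({x | x ∈ dom (G.inv t) ∧ act t x ∈ dom t ∩ dom (G.inv s)}
            = dom (G.inv (G.mul s t)) ∩ dom (G.inv t)) ∧
          ∀ x ∈ dom (G.inv (G.mul s t)) ∩ dom (G.inv t),
            act s (act t x) = act (G.mul s t) x))
    ↔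
    -- (E1) ∧ (E2) ∧ (E3)
    (((∀ s, Set.BijOn (act s) (dom (G.inv s)) (dom s) ∧
          (∀ x ∈ dom (G.inv s), act (G.inv s) (act s x) = x) ∧
          (∀ y ∈ dom s, act s (act (G.inv s) y) = y)) ∧
        (∀ x : X, ∃ s, x ∈ dom s)) ∧
      (∀ s t, G.Composable s t →
        ∀ x, x ∈ dom (G.inv t) → act t x ∈ dom t ∩ dom (G.inv s) →
          x ∈ dom (G.inv (G.mul s t)) ∧ act (G.mul s t) x = act s (act t x)) ∧
      (∀ s t, G.le s t → dom s ⊆ dom t)) := by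
  constructor
  · rintro ⟨⟨hid, hcov⟩, hdom, hP3⟩
    let θ : PAction G X :=
      ⟨dom, act, hmaps, hid, hcov, hdom, fun s t h => (hP3 s t h).1, fun s t h => (hP3 s t h).2⟩
    exact ⟨⟨fun s => ⟨θ.bijOn s, fun _ => θ.act_inv_act, fun _ => θ.act_act_inv⟩,
        fun x => (hcov x).imp fun _ => And.right⟩,
      fun s t h _ => θ.act_mul_of_mem h, fun _ _ => θ.dom_subset_of_le⟩
  · rintro ⟨⟨hbij, hcov⟩, hext, hmono⟩
    have hdom := dom_subset_dom_mul_inv_of_extends hmaps hext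
    have hmem := act_mem_dom_inv_of_extends (fun t => (hbij t).2.1) hmaps hext hmono
    refine ⟨⟨fun e => act_eq_self_of_idem (fun s => (hbij s).1.injOn) hmaps hext,
        fun x => ?_⟩, hdom, fun s t h => ⟨?_, fun x hx => ?_⟩⟩
    · obtain ⟨s, hs⟩ := hcov x
      exact ⟨_, G.idem_mul_inv s, hdom s hs⟩
    · ext x
      exact ⟨fun ⟨hx, htx⟩ => ⟨(hext s t h x hx htx).1, hx⟩,
        fun hx => ⟨hx.2, hmaps t x hx.2, hmem s t h hx⟩⟩
    · exact ((hext s t h x hx.2 ⟨hmaps t x hx.2, hmem s t h hx⟩).2).symm
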